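/- Let {T_n}_{n≥0} be a sequence of invertible operators on a Hilbert space H satisfying c‖x‖ ≤ ‖T_n x‖ ≤ ‖x‖ for all x ∈ H, all n, and some fixed c > 0. Then the operator-valued weighted shift S on the H-valued Hardy space H²_H(𝔻), defined by S(zⁿ ⊗ x) = z^(n+1) ⊗ T_n x, is a near-isometry. -/

import Mathlib

/-!
Identifying `H²_H(𝔻)` with `ℓ²(ℕ, H)`, the shift acts by `(Sf)₀ = 0`, `(Sf)ₙ₊₁ = Tₙ fₙ`, so
`‖Sf‖² = ∑ ‖Tₙ fₙ‖²` and the bounds on the weights pass to `S`. The adjoint shifts back,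
`(S*g)ₙ = Tₙ* gₙ₊₁`, hence `S*ⁿ Sⁿ⁺¹ f` vanishes at coordinate `0`. Conversely every `g` with
`g₀ = 0` lies in the range of `S`: solve `Tₙ yₙ = gₙ₊₁`; the lower bound `c‖yₙ‖ ≤ ‖gₙ₊₁‖`
keeps `y` in `ℓ²`.
-/

open ContinuousLinearMap

/-- A bounded operator `S` on a complex Hilbert space is a *near-isometry* if
it is a bounded-below contraction with `S*ⁿ Sⁿ⁺¹ K ⊆ S K` for all `n ≥ 0`. -/
def IsNearIsometry {K : Type*} [NormedAddCommGroup K] [InnerProductSpace ℂ K]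
    [CompleteSpace K] (S : K →L[ℂ] K) : Prop :=
  (∃ δ > (0 : ℝ), ∀ x : K, δ * ‖x‖ ≤ ‖S x‖ ∧ ‖S x‖ ≤ ‖x‖) ∧
  ∀ n : ℕ, ∀ x : K, ∃ y : K, ((adjoint S) ^ n) ((S ^ (n + 1)) x) = S y

open scoped lp

theorem lp.hasSum_norm_sq {ι : Type*} {E : ι → Type*} [∀ i, NormedAddCommGroup (E i)]
    (f : lp E 2) : HasSum (fun i => ‖f i‖ ^ 2) (‖f‖ ^ 2) := by
  simpa using lp.hasSum_norm (p := 2) (by norm_num) f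

theorem Memℓp.comp_injective {α β E : Type*} [NormedAddCommGroup E] {p : ENNReal}
    (hp : 0 < p.toReal) {f : α → E} (hf : Memℓp f p) {e : β → α} (he : Function.Injective e) :
    Memℓp (f ∘ e) p :=
  memℓp_gen ((hf.summable hp).comp_injective he)

section WeightedShift

variable {𝕜 H : Type*} [RCLike 𝕜] [NormedAddCommGroup H] [InnerProductSpace 𝕜 H]

/-- `lp.single 2 n x` plays the role of `zⁿ ⊗ x`. -/
def IsWeightedShift (T : ℕ → H →L[𝕜] H) (S : ℓ²(ℕ, H) →L[𝕜] ℓ²(ℕ, H)) : Prop :=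
  ∀ n x, S (lp.single 2 n x) = lp.single 2 (n + 1) (T n x)

namespace IsWeightedShift

variable {T : ℕ → H →L[𝕜] H} {S : ℓ²(ℕ, H) →L[𝕜] ℓ²(ℕ, H)}

variable [CompleteSpace H] (hS : IsWeightedShift T S)
include hS

theorem adjoint_apply (g : ℓ²(ℕ, H)) (n : ℕ) :
    adjoint S g n = adjoint (T n) (g (n + 1)) := by
  refine ext_inner_right 𝕜 fun x => ?_
  rw [← lp.inner_single_right, adjoint_inner_left, hS, lp.inner_single_right, adjoint_inner_left]

theorem adjoint_single_zero (x : H) : adjoint S (lp.single 2 0 x) = 0 := by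
  refine lp.ext <| funext fun m => ?_
  rw [hS.adjoint_apply, lp.single_apply_ne (E := fun _ => H) 2 0 x m.succ_ne_zero, map_zero,
    lp.coeFn_zero, Pi.zero_apply]

theorem adjoint_single_succ (n : ℕ) (x : H) :
    adjoint S (lp.single 2 (n + 1) x) = lp.single 2 n (adjoint (T n) x) := by
  refine lp.ext <| funext fun m => ?_
  rw [hS.adjoint_apply]
  rcases eq_or_ne m n with rfl | hm
  · rw [lp.single_apply_self (E := fun _ => H), lp.single_apply_self (E := fun _ => H)]
  · rw [lp.single_apply_ne (E := fun _ => H) 2 _ x (by omega), map_zero,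
      lp.single_apply_ne (E := fun _ => H) 2 _ _ hm]

theorem apply_zero (f : ℓ²(ℕ, H)) : S f 0 = 0 := by
  refine ext_inner_right 𝕜 fun x => ?_
  rw [← lp.inner_single_right, ← adjoint_inner_right, hS.adjoint_single_zero, inner_zero_right,
    inner_zero_left]

theorem apply_succ (f : ℓ²(ℕ, H)) (n : ℕ) : S f (n + 1) = T n (f n) := by
  refine ext_inner_right 𝕜 fun x => ?_
  rw [← lp.inner_single_right, ← adjoint_inner_right, hS.adjoint_single_succ,
    lp.inner_single_right, adjoint_inner_right]

theorem hasSum_norm_sq_apply (f : ℓ²(ℕ, H)) :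
    HasSum (fun n => ‖T n (f n)‖ ^ 2) (‖S f‖ ^ 2) := by
  simpa [hS.apply_zero, hS.apply_succ] using (hasSum_nat_add_iff' 1).mpr (lp.hasSum_norm_sq (S f))

theorem norm_apply_le (hT : ∀ n x, ‖T n x‖ ≤ ‖x‖) (f : ℓ²(ℕ, H)) : ‖S f‖ ≤ ‖f‖ :=
  (pow_le_pow_iff_left₀ (norm_nonneg _) (norm_nonneg _) two_ne_zero).mp <|
    hasSum_le (fun n => pow_le_pow_left₀ (norm_nonneg _) (hT n (f n)) 2)
      (hS.hasSum_norm_sq_apply f) (lp.hasSum_norm_sq f)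

theorem mul_norm_le_norm_apply {c : ℝ} (hc : 0 ≤ c) (hT : ∀ n x, c * ‖x‖ ≤ ‖T n x‖)
    (f : ℓ²(ℕ, H)) : c * ‖f‖ ≤ ‖S f‖ := by
  refine (pow_le_pow_iff_left₀ (by positivity) (norm_nonneg _) two_ne_zero).mp <|
    hasSum_le (fun n => pow_le_pow_left₀ (by positivity) (hT n (f n)) 2) ?_
      (hS.hasSum_norm_sq_apply f)
  simpa only [mul_pow] using (lp.hasSum_norm_sq f).mul_left (c ^ 2)

theorem exists_apply_eq_of_apply_zero {c : ℝ} (hc : 0 < c) (hT : ∀ n x, c * ‖x‖ ≤ ‖T n x‖)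
    (hsurj : ∀ n, Function.Surjective (T n)) {g : ℓ²(ℕ, H)} (hg : g 0 = 0) :
    ∃ f, S f = g := by
  choose y hy using fun n => hsurj n (g (n + 1))
  have hy_le (n : ℕ) : ‖y n‖ ≤ c⁻¹ * ‖g (n + 1)‖ := by
    rw [le_inv_mul_iff₀ hc, ← hy n]
    exact hT n (y n)
  have hmem : Memℓp y 2 :=
    (((lp.memℓp g).comp_injective (by norm_num) (add_left_injective 1)).norm.const_mul c⁻¹).mono
      hy_le
  refine ⟨⟨y, hmem⟩, lp.ext <| funext fun m => ?_⟩
  cases m with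
  | zero => exact (hS.apply_zero _).trans hg.symm
  | succ n => exact (hS.apply_succ _ n).trans (hy n)

theorem pow_apply_of_lt (f : ℓ²(ℕ, H)) {k m : ℕ} (hm : m < k) : (S ^ k) f m = 0 := by
  induction k generalizing m with
  | zero => omega
  | succ k ih =>
    rw [pow_succ', mul_apply_eq_comp]
    cases m with
    | zero => exact hS.apply_zero _
    | succ m => rw [hS.apply_succ, ih (by omega), map_zero]

theorem adjoint_pow_apply_zero {k : ℕ} {g : ℓ²(ℕ, H)} (hg : ∀ m ≤ k, g m = 0) :
    (adjoint S ^ k) g 0 = 0 := by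
  induction k generalizing g with
  | zero => exact hg 0 le_rfl
  | succ k ih =>
    rw [pow_succ, mul_apply_eq_comp]
    exact ih fun m hm => by rw [hS.adjoint_apply, hg (m + 1) (by omega), map_zero]

theorem adjoint_pow_pow_succ_apply_zero (n : ℕ) (f : ℓ²(ℕ, H)) :
    (adjoint S ^ n) ((S ^ (n + 1)) f) 0 = 0 :=
  hS.adjoint_pow_apply_zero fun _ hm => hS.pow_apply_of_lt f (Nat.lt_succ_of_le hm)

end IsWeightedShift

end WeightedShift

/-- The operator-valued weighted shift `S(zⁿ ⊗ x) = zⁿ⁺¹ ⊗ Tₙ x` on the `H`-valued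
Hardy space (modelled as `ℓ²(ℕ, H)`), with invertible weights `Tₙ` satisfying
`c‖x‖ ≤ ‖Tₙ x‖ ≤ ‖x‖`, is a near-isometry. -/
theorem stmt4 {H : Type*} [NormedAddCommGroup H] [InnerProductSpace ℂ H] [CompleteSpace H]
    (Tseq : ℕ → (H →L[ℂ] H)) (c : ℝ) (hc : 0 < c)
    (hinv : ∀ n, IsUnit (Tseq n))
    (hbd : ∀ (n : ℕ) (x : H), c * ‖x‖ ≤ ‖Tseq n x‖ ∧ ‖Tseq n x‖ ≤ ‖x‖)
    (S : lp (fun _ : ℕ => H) 2 →L[ℂ] lp (fun _ : ℕ => H) 2)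
    (hS : ∀ (n : ℕ) (x : H), S (lp.single 2 n x) = lp.single 2 (n + 1) (Tseq n x)) :
    IsNearIsometry S := by
  have hshift : IsWeightedShift Tseq S := hS
  have hlower (n : ℕ) (x : H) := (hbd n x).1
  have hsurj (n : ℕ) := (isUnit_iff_bijective.mp (hinv n)).surjective
  refine ⟨⟨c, hc, fun f => ⟨hshift.mul_norm_le_norm_apply hc.le hlower f,
    hshift.norm_apply_le (fun n x => (hbd n x).2) f⟩⟩, fun n f => ?_⟩
  obtain ⟨y, hy⟩ := hshift.exists_apply_eq_of_apply_zero hc hlower hsurj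
    (hshift.adjoint_pow_pow_succ_apply_zero n f)
  exact ⟨y, hy.symm⟩
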